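/- For each natural number q and parameters p, p' that are not nonpositive integers, Σ_{m=0}^{q} (-1)^m / ((p)_m (p')_{q-m}) · L_m^{(p-1)}(-y) · L_{q-m}^{(p'-1)}(y) = ((p+p'-1)/2)_q · ((p+p')/2)_q · (-4y)^q / ((p)_q (p')_q (p+p'-1)_q · q!) as polynomials in y. -/

import Mathlib

/-- Pochhammer symbol `(a)_n`. -/
noncomputable def poch (a : ℝ) (n : ℕ) : ℝ := Polynomial.eval a (ascPochhammer ℝ n)

/-- Generalized Laguerre polynomial `L_n^{(a)}(x) = ∑_{k=0}^n (-1)^k C(n+a, n-k) x^k / k!`. -/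
noncomputable def laguerre (a : ℝ) (n : ℕ) (x : ℝ) : ℝ :=
  ∑ k ∈ Finset.range (n + 1),
    (-1) ^ k * poch (a + k + 1) (n - k) / ((n - k).factorial * k.factorial) * x ^ k

/-!
Since `L_n^{(p-1)}(x) = (p)_n [tⁿ] ₀F₁(; p; -x t) eᵗ`, the left side is `[t^q]` of
`₀F₁(; p; -y t) e⁻ᵗ · ₀F₁(; p'; -y t) eᵗ`, in which the exponentials cancel. Chu–Vandermonde
evaluates `[t^q] ₀F₁(; p; t) ₀F₁(; p'; t) = (p + p' + q - 1)_q / ((p)_q (p')_q q!)`, and the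
duplication formula `(a)_{2q} = 4^q (a/2)_q ((a+1)/2)_q` at `a = p + p' - 1` rewrites
`(a)_q (a + q)_q` as the numerator on the right.
-/

open Finset PowerSeries
open scoped Nat

theorem poch_succ (a : ℝ) (n : ℕ) : poch a (n + 1) = poch a n * (a + n) := by
  simp [poch, ascPochhammer_succ_right]

theorem poch_add (a : ℝ) (m n : ℕ) : poch a (m + n) = poch a m * poch (a + m) n := by
  simpa [poch, Polynomial.eval_comp] using
    (congrArg (Polynomial.eval a) (ascPochhammer_mul ℝ m n)).symm

theorem poch_two_mul (a : ℝ) (n : ℕ) :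
    poch a (2 * n) = 4 ^ n * poch (a / 2) n * poch ((a + 1) / 2) n := by
  induction n with
  | zero => simp [poch]
  | succ n ih =>
    rw [show 2 * (n + 1) = 2 * n + 1 + 1 by ring, poch_succ, poch_succ, ih, poch_succ, poch_succ]
    push_cast
    ring

/-- Chu–Vandermonde for falling factorials, written via `r (r - 1) ⋯ (r - i + 1) = (r - i + 1)ᵢ`. -/
theorem poch_sub_add_one_eq_sum (r s : ℝ) (n : ℕ) :
    poch (r + s - n + 1) n = ∑ ij ∈ antidiagonal n,
      n.choose ij.1 * (poch (r - ij.1 + 1) ij.1 * poch (s - ij.2 + 1) ij.2) := by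
  simp only [poch, ← Polynomial.ascPochhammer_smeval_eq_eval,
    ← Polynomial.descPochhammer_smeval_eq_ascPochhammer]
  exact Ring.descPochhammer_smeval_add n (Commute.all r s)

theorem sum_neg_one_pow_mul_coeff_mul_exp {A : Type*} [CommRing A] [Algebra ℚ A]
    (f g : A⟦X⟧) (n : ℕ) :
    ∑ m ∈ range (n + 1), (-1) ^ m * coeff m (f * exp A) * coeff (n - m) (g * exp A) =
      coeff n (rescale (-1) f * g) := by
  have hexp : rescale (-1 : A) (exp A) * exp A = 1 := by
    simpa using exp_mul_exp_eq_exp_add (-1 : A) 1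
  have : rescale (-1) (f * exp A) * (g * exp A) = rescale (-1) f * g := by
    rw [map_mul, mul_mul_mul_comm, hexp, mul_one]
  rw [← this, coeff_mul, Nat.sum_antidiagonal_eq_sum_range_succ_mk]
  exact sum_congr rfl fun m _ => by rw [coeff_rescale]

/-- The power series of `₀F₁(; p; t) = ∑ tᵏ / ((p)ₖ k!)`. -/
noncomputable def hyp0F1Series (p : ℝ) : ℝ⟦X⟧ := mk fun k => (poch p k * k !)⁻¹

theorem laguerre_sub_one_eq_coeff (p : ℝ) (hp : ∀ k : ℕ, poch p k ≠ 0) (n : ℕ) (x : ℝ) :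
    laguerre (p - 1) n x = poch p n * coeff n (rescale (-x) (hyp0F1Series p) * exp ℝ) := by
  rw [coeff_mul, Nat.sum_antidiagonal_eq_sum_range_succ_mk, mul_sum]
  refine sum_congr rfl fun k hk => ?_
  have hkn : k ≤ n := Nat.lt_succ_iff.mp (mem_range.mp hk)
  have hsplit : poch p n = poch p k * poch (p + k) (n - k) := by
    rw [← poch_add, Nat.add_sub_cancel' hkn]
  have := hp k
  simp only [coeff_rescale, hyp0F1Series, coeff_mk, coeff_exp, hsplit,
    show p - 1 + k + 1 = p + k by ring]
  push_cast
  field_simp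
  rw [neg_pow x]
  ring

theorem coeff_hyp0F1Series_mul (p p' : ℝ) (hp : ∀ k : ℕ, poch p k ≠ 0)
    (hp' : ∀ k : ℕ, poch p' k ≠ 0) (n : ℕ) :
    coeff n (hyp0F1Series p * hyp0F1Series p') =
      poch (p + p' + n - 1) n / (poch p n * poch p' n * n !) := by
  rw [eq_div_iff (by have := hp n; have := hp' n; positivity),
    show p + p' + n - 1 = (p' + n - 1) + (p + n - 1) - n + 1 by ring,
    poch_sub_add_one_eq_sum, coeff_mul, sum_mul]
  refine sum_congr rfl fun ij hij => ?_
  obtain ⟨i, j⟩ := ij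
  obtain rfl : i + j = n := mem_antidiagonal.mp hij
  have hi := hp i
  have hj := hp' j
  have hsplit : poch p (i + j) = poch p i * poch (p + i) j := poch_add p i j
  have hsplit' : poch p' (i + j) = poch p' j * poch (p' + j) i := by rw [add_comm, poch_add]
  have hfac : ((i + j)! : ℝ) = (i + j).choose i * i ! * j ! := by
    rw [Nat.choose_symm_add]
    exact_mod_cast (Nat.add_choose_mul_factorial_mul_factorial i j).symm
  simp only [hyp0F1Series, coeff_mk, hsplit, hsplit', hfac, Nat.cast_add,
    show p' + (i + j) - 1 - i + 1 = p' + j by ring, show p + (i + j) - 1 - j + 1 = p + i by ring]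
  field_simp

theorem exton_6_2_corrected (p p' : ℝ) (q : ℕ) (y : ℝ)
    (hp : ∀ k : ℕ, poch p k ≠ 0) (hp' : ∀ k : ℕ, poch p' k ≠ 0)
    (hpp' : ∀ k : ℕ, poch (p + p' - 1) k ≠ 0) :
    ∑ m ∈ Finset.range (q + 1),
        (-1) ^ m / (poch p m * poch p' (q - m)) *
          laguerre (p - 1) m (-y) * laguerre (p' - 1) (q - m) y =
      poch ((p + p' - 1) / 2) q * poch ((p + p') / 2) q * (-4 * y) ^ q /
        (poch p q * poch p' q * poch (p + p' - 1) q * q.factorial) := by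
  have hterm : ∀ m ∈ range (q + 1),
      (-1) ^ m / (poch p m * poch p' (q - m)) *
          laguerre (p - 1) m (-y) * laguerre (p' - 1) (q - m) y =
        (-1) ^ m * coeff m (rescale y (hyp0F1Series p) * exp ℝ) *
          coeff (q - m) (rescale (-y) (hyp0F1Series p') * exp ℝ) := by
    intro m _
    have := hp m
    have := hp' (q - m)
    rw [laguerre_sub_one_eq_coeff p hp, laguerre_sub_one_eq_coeff p' hp', neg_neg]
    field_simp
  have hdup : poch ((p + p' - 1) / 2) q * poch ((p + p') / 2) q * 4 ^ q =
      poch (p + p' - 1) q * poch (p + p' + q - 1) q := by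
    have h := poch_two_mul (p + p' - 1) q
    rw [two_mul, poch_add, show p + p' - 1 + 1 = p + p' by ring,
      show p + p' - 1 + q = p + p' + q - 1 by ring] at h
    linear_combination -h
  rw [sum_congr rfl hterm, sum_neg_one_pow_mul_coeff_mul_exp, rescale_rescale, mul_neg_one,
    ← map_mul, coeff_rescale, coeff_hyp0F1Series_mul p p' hp hp' q]
  have := hpp' q
  have := hp q
  have := hp' q
  rw [show -4 * y = 4 * -y by ring, mul_pow]
  field_simp
  linear_combination -(-y) ^ q * hdup
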